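/- (Theorem 1, Stability of ECAA) For every initial matching Φ₀ there exist k ∈ ℕ and a finite sequence Φ₀, Φ₁, …, Φ_k of matchings, where each Φ_{i+1} is the swap matching of Φ_i at some swap-blocking pair of Φ_i, such that the final matching Φ_k is two-sided exchange-stable, i.e., Φ_k admits no swap-blocking pair. -/

import Mathlib

/- Every swap-blocking pair is a Pareto improvement for the four players involved and changes
nobody else's utility, so the sum of all user and channel utilities strictly increases along a
swap. There are finitely many allocations, hence every sequence of swaps at blocking pairs is
finite, and greedily swapping until no blocking pair is left ends in a 2ES matching. -/

/-- The fiber of a channel `m` under an allocation `Φ`: the set of users assigned to `m`. -/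
def fiber {N M : ℕ} (Φ : Fin N → Fin M) (m : Fin M) : Finset (Fin N) :=
  Finset.univ.filter (fun k => Φ k = m)

/-- `Φ` is a matching: every channel serves at most `D` users. -/
def IsMatching {N M : ℕ} (D : ℕ) (Φ : Fin N → Fin M) : Prop :=
  ∀ m : Fin M, (fiber Φ m).card ≤ D

/-- The swap matching `Φ^{n↔n'}`. -/
def swapMatch {N M : ℕ} (Φ : Fin N → Fin M) (n n' : Fin N) : Fin N → Fin M :=
  fun k => if k = n then Φ n' else if k = n' then Φ n else Φ k

/-- `(n, n')` is a swap-blocking pair for `Φ`. -/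
def IsBlockingPair {N M : ℕ} (u : Fin N → Fin M → ℝ) (w : Fin M → Finset (Fin N) → ℝ)
    (Φ : Fin N → Fin M) (n n' : Fin N) : Prop :=
  Φ n ≠ Φ n' ∧
    (u n (swapMatch Φ n n' n) ≥ u n (Φ n)) ∧
    (u n' (swapMatch Φ n n' n') ≥ u n' (Φ n')) ∧
    (w (Φ n) (fiber (swapMatch Φ n n') (Φ n)) ≥ w (Φ n) (fiber Φ (Φ n))) ∧
    (w (Φ n') (fiber (swapMatch Φ n n') (Φ n')) ≥ w (Φ n') (fiber Φ (Φ n'))) ∧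
    ((u n (swapMatch Φ n n' n) > u n (Φ n)) ∨
     (u n' (swapMatch Φ n n' n') > u n' (Φ n')) ∨
     (w (Φ n) (fiber (swapMatch Φ n n') (Φ n)) > w (Φ n) (fiber Φ (Φ n))) ∨
     (w (Φ n') (fiber (swapMatch Φ n n') (Φ n')) > w (Φ n') (fiber Φ (Φ n'))))

/-- `Φ` is two-sided exchange-stable (2ES): no swap-blocking pair for `Φ` exists. -/
def IsTwoSidedExchangeStable {N M : ℕ} (u : Fin N → Fin M → ℝ)
    (w : Fin M → Finset (Fin N) → ℝ) (Φ : Fin N → Fin M) : Prop :=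
  ¬ ∃ n n' : Fin N, IsBlockingPair u w Φ n n'

theorem WellFounded.exists_chain_to_terminal {α : Type*} {r : α → α → Prop}
    (hr : WellFounded (flip r)) (a : α) :
    ∃ (k : ℕ) (f : ℕ → α), f 0 = a ∧ (∀ i < k, r (f i) (f (i + 1))) ∧ ∀ b, ¬ r (f k) b := by
  induction a using hr.induction with
  | _ a ih =>
    by_cases hmove : ∃ b, r a b
    · obtain ⟨b, hab⟩ := hmove
      obtain ⟨k, f, hf0, hstep, hfk⟩ := ih b hab
      refine ⟨k + 1, fun | 0 => a | i + 1 => f i, rfl, ?_, hfk⟩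
      rintro (_ | i) hi
      · simpa [hf0] using hab
      · exact hstep i (by omega)
    · exact ⟨0, fun _ => a, rfl, nofun, fun b hab => hmove ⟨b, hab⟩⟩

theorem Finite.wellFounded_flip_of_lt_comp {α β : Type*} [Finite α] [Preorder β]
    {r : α → α → Prop} (g : α → β) (hg : ∀ a b, r a b → g a < g b) :
    WellFounded (flip r) :=
  Subrelation.wf (fun h => hg _ _ h)
    (Finite.wellFounded_of_trans_of_irrefl (InvImage (· > ·) g))

section Swap

variable {N M : ℕ}

theorem swapMatch_apply_of_ne (Φ : Fin N → Fin M) {n n' k : Fin N} (hn : k ≠ n) (hn' : k ≠ n') :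
    swapMatch Φ n n' k = Φ k := by
  simp [swapMatch, hn, hn']

theorem fiber_swapMatch_of_ne (Φ : Fin N → Fin M) {n n' : Fin N} {m : Fin M}
    (hn : m ≠ Φ n) (hn' : m ≠ Φ n') : fiber (swapMatch Φ n n') m = fiber Φ m := by
  ext k
  simp only [fiber, Finset.mem_filter, Finset.mem_univ, true_and]
  unfold swapMatch
  split_ifs with hk hk' <;> grind

end Swap

section Welfare

variable {N M : ℕ} (u : Fin N → Fin M → ℝ) (w : Fin M → Finset (Fin N) → ℝ)

/-- Players are users `Sum.inl n` and channels `Sum.inr m`. -/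
def playerUtility (Φ : Fin N → Fin M) : Fin N ⊕ Fin M → ℝ :=
  Sum.elim (fun n => u n (Φ n)) (fun m => w m (fiber Φ m))

def welfare (Φ : Fin N → Fin M) : ℝ :=
  ∑ p, playerUtility u w Φ p

def SwapStep (Φ Ψ : Fin N → Fin M) : Prop :=
  ∃ n n', IsBlockingPair u w Φ n n' ∧ Ψ = swapMatch Φ n n'

variable {u w} {Φ : Fin N → Fin M} {n n' : Fin N}

theorem IsBlockingPair.playerUtility_le (h : IsBlockingPair u w Φ n n') (p : Fin N ⊕ Fin M) :
    playerUtility u w Φ p ≤ playerUtility u w (swapMatch Φ n n') p := by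
  obtain ⟨-, hun, hun', hwn, hwn', -⟩ := h
  rcases p with k | m
  · by_cases hk : k = n
    · subst hk; exact hun
    by_cases hk' : k = n'
    · subst hk'; exact hun'
    simp [playerUtility, swapMatch_apply_of_ne Φ hk hk']
  · by_cases hm : m = Φ n
    · subst hm; exact hwn
    by_cases hm' : m = Φ n'
    · subst hm'; exact hwn'
    simp [playerUtility, fiber_swapMatch_of_ne Φ hm hm']

theorem IsBlockingPair.exists_playerUtility_lt (h : IsBlockingPair u w Φ n n') :
    ∃ p, playerUtility u w Φ p < playerUtility u w (swapMatch Φ n n') p := by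
  obtain ⟨-, -, -, -, -, hn | hn' | hwn | hwn'⟩ := h
  exacts [⟨.inl n, hn⟩, ⟨.inl n', hn'⟩, ⟨.inr (Φ n), hwn⟩, ⟨.inr (Φ n'), hwn'⟩]

theorem IsBlockingPair.welfare_lt (h : IsBlockingPair u w Φ n n') :
    welfare u w Φ < welfare u w (swapMatch Φ n n') :=
  Finset.sum_lt_sum (fun p _ => h.playerUtility_le p)
    (let ⟨p, hp⟩ := h.exists_playerUtility_lt; ⟨p, Finset.mem_univ p, hp⟩)

theorem wellFounded_flip_swapStep : WellFounded (flip (SwapStep (N := N) (M := M) u w)) :=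
  Finite.wellFounded_flip_of_lt_comp (welfare u w) fun _ _ ⟨_, _, h, hΨ⟩ => hΨ ▸ h.welfare_lt

end Welfare

theorem ecaa_stability_general
    (N M : ℕ)
    (u : Fin N → Fin M → ℝ) (w : Fin M → Finset (Fin N) → ℝ)
    (Φ₀ : Fin N → Fin M) :
    ∃ (k : ℕ) (Φ : ℕ → (Fin N → Fin M)),
      Φ 0 = Φ₀ ∧
      (∀ i < k, ∃ n n' : Fin N,
        IsBlockingPair u w (Φ i) n n' ∧ Φ (i + 1) = swapMatch (Φ i) n n') ∧
      IsTwoSidedExchangeStable u w (Φ k) := by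
  obtain ⟨k, Φ, h0, hstep, hterm⟩ := wellFounded_flip_swapStep.exists_chain_to_terminal Φ₀
  exact ⟨k, Φ, h0, hstep, fun ⟨n, n', h⟩ => hterm _ ⟨n, n', h, rfl⟩⟩

/-- **Stability of ECAA.** Starting from any initial matching `Φ₀`, there is a finite
sequence of swap operations at swap-blocking pairs whose final matching is two-sided
exchange-stable. -/
theorem ecaa_stability
    (N M D : ℕ) (hN : 1 ≤ N) (hM : 1 ≤ M) (hD : 1 ≤ D)
    (u : Fin N → Fin M → ℝ) (w : Fin M → Finset (Fin N) → ℝ)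
    (Φ₀ : Fin N → Fin M) (hΦ₀ : IsMatching D Φ₀) :
    ∃ (k : ℕ) (Φ : ℕ → (Fin N → Fin M)),
      Φ 0 = Φ₀ ∧
      (∀ i < k, ∃ n n' : Fin N,
        IsBlockingPair u w (Φ i) n n' ∧ Φ (i + 1) = swapMatch (Φ i) n n') ∧
      IsTwoSidedExchangeStable u w (Φ k) :=
  ecaa_stability_general N M u w Φ₀
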